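/- arXiv:1511.05023 — 2 statements merged into one kernel-verified Lean document; each statement's English description precedes it below -/
import Mathlib

section
/- For every integer n > 1 there exists a binary ±1 sequence A of length n with peak sidelobe level μ(A) ≤ √(2n(log n - log log n + 0.862)); i.e., μ_min(n) ≤ √(2n(log n - log log n + 0.862)). -/
/-!
Union bound over the shifts. For `0 < k ≤ n` the map `b ↦ (b|[0,k), (b j == b (j + k))_j)` is
injective, so at most `2 ^ k` sequences share a given vector of agreements, and the autocorrelation
at shift `k` is the signed sum of that vector. The Chernoff bound `cosh t ≤ exp (t² / 2)` then
leaves at most `2 ^ (n + 1) exp (-λ² / (2 (n - k)))` sequences with `|c_k| > λ`.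
Put `λ² = 2 n β`. By AM-GM, `n / m + m / n ≥ 2`, so `∑_{m < n} exp (-n β / m)` is dominated by a
geometric sum, at most `n e^{-β} / β`. For `β = L - log L + 0.862` with `L = log n` one has
`n e^{-β} = L e^{-0.862}`, and the tangent line of `log` at `1 / (1 - 2 e^{-0.862})` shows
`2 L e^{-0.862} < β`. So fewer than `2 ^ n` sequences are bad.
-/

open scoped Classical

/-- The `j`-th entry (as `±1 : ℝ`) of the binary sequence encoded by `b`. -/
noncomputable def rad {n : ℕ} (b : Fin n → Bool) (j : ℕ) : ℝ :=
  if h : j < n then (if b ⟨j, h⟩ then 1 else -1) else 0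

/-- The aperiodic autocorrelation at shift `k`. -/
noncomputable def autocorr {n : ℕ} (b : Fin n → Bool) (k : ℕ) : ℝ :=
  ∑ j ∈ Finset.range (n - k), rad b j * rad b (j + k)

/-- The peak sidelobe level `μ(A) = max_{1 ≤ k ≤ n-1} |c_k|`. -/
noncomputable def psl {n : ℕ} (b : Fin n → Bool) : ℝ :=
  ⨆ k ∈ Finset.Icc 1 (n - 1), |autocorr b k|

open Real Finset

noncomputable def boolSign (x : Bool) : ℝ := if x then 1 else -1

section Chernoff

variable {ι : Type*} [Fintype ι] [DecidableEq ι]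

lemma sum_exp_mul_sum_boolSign (t : ℝ) :
    ∑ ε : ι → Bool, exp (t * ∑ i, boolSign (ε i)) = (2 * cosh t) ^ Fintype.card ι := by
  have h2cosh : ∑ x : Bool, exp (t * boolSign x) = 2 * cosh t := by
    simp [boolSign, cosh_eq]
    ring
  simp_rw [mul_sum, exp_sum]
  rw [← Fintype.prod_sum fun _ x => exp (t * boolSign x), prod_const, card_univ, h2cosh]

lemma card_lt_abs_sum_boolSign_le {a : ℝ} (ha : 0 ≤ a) :
    (#{ε : ι → Bool | a < |∑ i, boolSign (ε i)|} : ℝ)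
      ≤ 2 ^ (Fintype.card ι + 1) * exp (-a ^ 2 / (2 * Fintype.card ι)) := by
  set m := Fintype.card ι
  set t := a / m
  have ht : 0 ≤ t := by positivity
  set S : (ι → Bool) → ℝ := fun ε => ∑ i, boolSign (ε i)
  have hchernoff : ∀ ε, a < |S ε| → 1 ≤ exp (-(t * a)) * (exp (t * S ε) + exp (-t * S ε)) := by
    intro ε hε
    rw [mul_add, ← exp_add, ← exp_add]
    rcases lt_abs.mp hε with h | h
    · have := one_le_exp (x := -(t * a) + t * S ε) (by nlinarith)
      linarith [exp_pos (-(t * a) + -t * S ε)]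
    · have := one_le_exp (x := -(t * a) + -t * S ε) (by nlinarith)
      linarith [exp_pos (-(t * a) + t * S ε)]
  calc (#{ε : ι → Bool | a < |S ε|} : ℝ)
      ≤ ∑ ε, exp (-(t * a)) * (exp (t * S ε) + exp (-t * S ε)) := by
        rw [natCast_card_filter]
        refine sum_le_sum fun ε _ => ?_
        split_ifs with h
        · exact hchernoff ε h
        · positivity
    _ = 2 * exp (-(t * a)) * (2 * cosh t) ^ m := by
        simp only [← mul_sum, sum_add_distrib, S, sum_exp_mul_sum_boolSign, cosh_neg]
        ring
    _ ≤ 2 * exp (-(t * a)) * (2 * exp (t ^ 2 / 2)) ^ m := by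
        gcongr
        exact cosh_le_exp_half_sq t
    _ = 2 ^ (m + 1) * exp (m * (t ^ 2 / 2) - t * a) := by
        rw [mul_pow, ← exp_nat_mul, sub_eq_add_neg, exp_add]
        ring
    _ = 2 ^ (m + 1) * exp (-a ^ 2 / (2 * m)) := by
        rcases eq_or_ne (m : ℝ) 0 with hm | hm
        · simp [t, hm]
        · congr 2
          simp only [t]
          field_simp
          ring

end Chernoff

section Autocorrelation

variable {n : ℕ}

def shiftAgree (b : Fin n → Bool) (k : ℕ) (j : Fin (n - k)) : Bool :=
  b (Fin.castLE (Nat.sub_le n k) j) == b ⟨j + k, Nat.add_lt_of_lt_sub j.isLt⟩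

lemma boolSign_beq (x y : Bool) : boolSign (x == y) = boolSign x * boolSign y := by
  cases x <;> cases y <;> norm_num [boolSign]

lemma rad_of_lt (b : Fin n → Bool) {j : ℕ} (h : j < n) : rad b j = boolSign (b ⟨j, h⟩) :=
  dif_pos h

lemma autocorr_eq_sum_boolSign_shiftAgree (b : Fin n → Bool) (k : ℕ) :
    autocorr b k = ∑ j, boolSign (shiftAgree b k j) := by
  rw [autocorr, ← Fin.sum_univ_eq_sum_range]
  refine sum_congr rfl fun j _ => ?_
  rw [shiftAgree, boolSign_beq, rad_of_lt, rad_of_lt]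
  rfl

lemma injective_prefix_shiftAgree {k : ℕ} (hk : 0 < k) (hkn : k ≤ n) :
    Function.Injective fun b : Fin n → Bool =>
      (fun i : Fin k => b (Fin.castLE hkn i), shiftAgree b k) := by
  intro b b' h
  obtain ⟨hpre, hagree⟩ := Prod.mk.inj h
  funext ⟨j, hj⟩
  induction j using Nat.strong_induction_on with
  | _ j ih =>
    by_cases hjk : j < k
    · exact congrFun hpre ⟨j, hjk⟩
    · have hprev := congrFun hagree ⟨j - k, by omega⟩
      rw [shiftAgree, shiftAgree, Fin.castLE_mk, ih (j - k) (by omega) (by omega)] at hprev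
      have hcancel : ∀ x y z : Bool, (x == y) = (x == z) → y = z := by decide
      simpa [Nat.sub_add_cancel (not_lt.mp hjk)] using hcancel _ _ _ hprev

lemma card_lt_abs_autocorr_le {k : ℕ} (hk : 0 < k) (hkn : k ≤ n) {a : ℝ} (ha : 0 ≤ a) :
    (#{b : Fin n → Bool | a < |autocorr b k|} : ℝ)
      ≤ 2 ^ (n + 1) * exp (-a ^ 2 / (2 * (n - k : ℕ))) := by
  set T : Finset (Fin (n - k) → Bool) := {ε | a < |∑ j, boolSign (ε j)|}
  have hcard : #{b : Fin n → Bool | a < |autocorr b k|} ≤ 2 ^ k * #T := by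
    calc #{b : Fin n → Bool | a < |autocorr b k|}
        ≤ #((univ : Finset (Fin k → Bool)) ×ˢ T) :=
          card_le_card_of_injOn _
            (fun b hb => by simpa [T, autocorr_eq_sum_boolSign_shiftAgree] using hb)
            (injective_prefix_shiftAgree hk hkn).injOn
      _ = 2 ^ k * #T := by simp [card_product]
  calc (#{b : Fin n → Bool | a < |autocorr b k|} : ℝ)
      ≤ 2 ^ k * #T := by exact_mod_cast hcard
    _ ≤ 2 ^ k * (2 ^ (n - k + 1) * exp (-a ^ 2 / (2 * (n - k : ℕ)))) := by
        gcongr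
        simpa using card_lt_abs_sum_boolSign_le (ι := Fin (n - k)) ha
    _ = 2 ^ (n + 1) * exp (-a ^ 2 / (2 * (n - k : ℕ))) := by
        rw [← mul_assoc, ← pow_add]
        congr 2
        omega

end Autocorrelation

lemma exists_psl_le_of_sum_card_lt {n : ℕ} {a : ℝ} (ha : 0 ≤ a)
    (h : ∑ k ∈ Icc 1 (n - 1), (#{b : Fin n → Bool | a < |autocorr b k|} : ℝ) < 2 ^ n) :
    ∃ b : Fin n → Bool, psl b ≤ a := by
  set bad := (Icc 1 (n - 1)).biUnion fun k => ({b | a < |autocorr b k|} : Finset (Fin n → Bool))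
  have hbad : #bad < #(univ : Finset (Fin n → Bool)) := by
    have hsum : (#bad : ℝ) < 2 ^ n :=
      (Nat.cast_le.mpr card_biUnion_le).trans_lt (by push_cast; exact h)
    simpa using (by exact_mod_cast hsum : #bad < 2 ^ n)
  obtain ⟨b, -, hb⟩ := exists_mem_notMem_of_card_lt_card hbad
  refine ⟨b, Real.iSup_le (fun k => Real.iSup_le (fun hk => ?_) ha) ha⟩
  by_contra! hlt
  exact hb (mem_biUnion.mpr ⟨k, hk, mem_filter.mpr ⟨mem_univ _, hlt⟩⟩)

lemma sum_Icc_one_sub_reflect {M : Type*} [AddCommMonoid M] (f : ℕ → M) (n : ℕ) :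
    ∑ k ∈ Icc 1 (n - 1), f (n - k) = ∑ k ∈ Icc 1 (n - 1), f k := by
  refine sum_nbij' (n - ·) (n - ·) ?_ ?_ ?_ ?_ fun _ _ => rfl <;>
    · intro k hk
      simp only [mem_Icc] at hk ⊢
      omega

lemma sum_Icc_exp_neg_mul_div_le {n : ℕ} (hn : 0 < n) {β : ℝ} (hβ : 0 < β) :
    ∑ m ∈ Icc 1 (n - 1), exp (-(n * β / m)) ≤ n * exp (-β) / β := by
  have hn' : (0 : ℝ) < n := Nat.cast_pos.mpr hn
  set r := exp (β / n)
  have hamgm : ∀ m ∈ Icc 1 (n - 1), exp (-(n * β / m)) ≤ exp (-(2 * β)) * r ^ m := by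
    intro m hm
    have hm' : (0 : ℝ) < m := Nat.cast_pos.mpr (mem_Icc.mp hm).1
    rw [← exp_nat_mul, ← exp_add, exp_le_exp]
    have hsq : 0 ≤ β * (n - m) ^ 2 / (n * m) := by positivity
    have hexpand : -(2 * β) + m * (β / n) - -(n * β / m) = β * (n - m) ^ 2 / (n * m) := by
      field_simp
      ring
    linarith
  have hgeom : β / n * ∑ m ∈ range n, r ^ m ≤ exp β := by
    have hr : β / n ≤ r - 1 := by linarith [add_one_le_exp (β / n)]
    have hrn : r ^ n = exp β := by rw [← exp_nat_mul]; field_simp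
    calc β / n * ∑ m ∈ range n, r ^ m ≤ (r - 1) * ∑ m ∈ range n, r ^ m := by gcongr
      _ = exp β - 1 := by rw [mul_comm, geom_sum_mul, hrn]
      _ ≤ exp β := by linarith
  calc ∑ m ∈ Icc 1 (n - 1), exp (-(n * β / m))
      ≤ ∑ m ∈ Icc 1 (n - 1), exp (-(2 * β)) * r ^ m := sum_le_sum hamgm
    _ ≤ exp (-(2 * β)) * ∑ m ∈ range n, r ^ m := by
        rw [← mul_sum]
        gcongr
        intro m hm
        simp only [mem_Icc, mem_range] at hm ⊢
        omega
    _ ≤ exp (-(2 * β)) * (n * exp β / β) := by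
        gcongr
        rw [le_div_iff₀ hβ]
        rw [div_mul_eq_mul_div, div_le_iff₀ hn'] at hgeom
        linarith
    _ = n * exp (-β) / β := by
        rw [show -(2 * β) = -β + -β by ring, exp_add, exp_neg β]
        field_simp

-- `0.862` is just above the root of `c + 1 + log (1 - 2 e^{-c}) = 0`, hence the ten Taylor terms.
lemma exp_neg_one_add_two_lt_exp : exp (-1) + 2 < exp 0.862 := by
  have htaylor := sum_le_exp_of_nonneg (x := 0.862) (by norm_num) 10
  norm_num [Finset.sum_range_succ, Nat.factorial] at htaylor
  linarith [exp_neg_one_lt_d9]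

lemma two_mul_mul_exp_neg_lt {L : ℝ} (hL : 0 < L) :
    2 * L * exp (-0.862) < L - log L + 0.862 := by
  set q := 1 - 2 * exp (-0.862) with hq_def
  have hq : exp (-1.862) < q := by
    have hinv : exp 0.862 * exp (-0.862) = 1 := by rw [← exp_add]; norm_num
    have hsplit : exp (-1.862) = exp (-1) * exp (-0.862) := by rw [← exp_add]; norm_num
    have := mul_lt_mul_of_pos_right (lt_sub_iff_add_lt.mpr exp_neg_one_add_two_lt_exp)
      (exp_pos (-0.862))
    linarith
  have hq0 : 0 < q := (exp_pos _).trans hq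
  have hlogq : -1.862 < log q := (lt_log_iff_exp_lt hq0).mpr hq
  have htangent := log_le_sub_one_of_pos (mul_pos hq0 hL)
  rw [log_mul hq0.ne' hL.ne'] at htangent
  linarith [show q * L = L - 2 * L * exp (-0.862) by rw [hq_def]; ring]

theorem stmt_15 (n : ℕ) (hn : 1 < n) :
    ∃ b : Fin n → Bool,
      psl b ≤ Real.sqrt (2 * n * (Real.log n - Real.log (Real.log n) + 0.862)) := by
  set L := log n
  set β := L - log L + 0.862 with hβ_def
  have hn0 : (0 : ℝ) < n := by positivity
  have hL : 0 < L := log_pos (by exact_mod_cast hn)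
  have hkey := two_mul_mul_exp_neg_lt hL
  have hβ : 0 < β := by linarith [hβ_def, show 0 < 2 * L * exp (-0.862) by positivity]
  have hexp : n * exp (-β) = L * exp (-0.862) := by
    rw [show -β = -L + log L + -0.862 by ring, exp_add, exp_add, exp_log hL, exp_neg, exp_log hn0]
    field_simp
  set a := sqrt (2 * n * β)
  have ha2 : a ^ 2 = 2 * n * β := sq_sqrt (by positivity)
  refine exists_psl_le_of_sum_card_lt (sqrt_nonneg _) ?_
  calc ∑ k ∈ Icc 1 (n - 1), (#{b : Fin n → Bool | a < |autocorr b k|} : ℝ)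
      ≤ ∑ k ∈ Icc 1 (n - 1), 2 ^ (n + 1) * exp (-a ^ 2 / (2 * (n - k : ℕ))) :=
        sum_le_sum fun k hk => card_lt_abs_autocorr_le (mem_Icc.mp hk).1 (by grind) (sqrt_nonneg _)
    _ = 2 ^ (n + 1) * ∑ m ∈ Icc 1 (n - 1), exp (-(n * β / m)) := by
        rw [← mul_sum, ← sum_Icc_one_sub_reflect (fun m : ℕ => exp (-(n * β / m))), ha2]
        simp only [neg_div, mul_assoc, mul_div_mul_left _ _ (two_ne_zero' ℝ)]
    _ ≤ 2 ^ (n + 1) * (n * exp (-β) / β) := by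
        gcongr
        exact sum_Icc_exp_neg_mul_div_le (by omega) hβ
    _ < 2 ^ (n + 1) * (1 / 2) := by
        refine mul_lt_mul_of_pos_left ?_ (by positivity)
        rw [hexp, div_lt_iff₀ hβ]
        linarith
    _ = 2 ^ n := by ring
end

section
/- Suppose ψ : ℕ → ℝ satisfies ψ(n) > 0 for all large n and 2n/(ψ(n) e^{ψ(n)}) → 0 as n → ∞. Then for A uniform on {±1}^n, P[μ(A) ≤ √(2nψ(n))] → 1 as n → ∞. -/
/-
For each shift `k ≥ 1`, appending a bit `x = ±1` to a sequence `a` of length `m` changes `c_k`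
by `a_{m-k} x` with `a_{m-k} = ±1`, so summing over the new bit multiplies `∑_A exp (λ c_k(A))`
by `2 cosh λ`; hence this sum is `2^n cosh^(n-k) λ` and the Chernoff bound gives
`P(|c_k| ≥ t) ≤ 2 exp(-t² / 2(n-k))`. For `t² = 2nψ` the exponent `nψ/(n-k)` is at least
`ψ + kψ/n`, so the union bound over `k` is dominated by a geometric series with sum at most
`2 e^{-ψ} n / ψ`.
-/

open scoped Classical

open Finset Real Filter

section Chernoff

variable {α : Type*} [Fintype α] {f : α → ℝ} {C σ t : ℝ}

lemma card_le_apply_le_of_sum_exp_le (hσ : 0 < σ) (ht : 0 ≤ t)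
    (hf : ∀ l : ℝ, ∑ x, exp (l * f x) ≤ C * exp (σ * l ^ 2 / 2)) :
    (#{x | t ≤ f x} : ℝ) ≤ C * exp (-t ^ 2 / (2 * σ)) := by
  set l := t / σ
  have hl : 0 ≤ l := div_nonneg ht hσ.le
  have markov : (#{x | t ≤ f x} : ℝ) * exp (l * t) ≤ ∑ x, exp (l * f x) :=
    calc (#{x | t ≤ f x} : ℝ) * exp (l * t) = ∑ x ∈ {x | t ≤ f x}, exp (l * t) := by
          rw [sum_const, nsmul_eq_mul]
      _ ≤ ∑ x ∈ {x | t ≤ f x}, exp (l * f x) := sum_le_sum fun x hx ↦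
          exp_le_exp.2 (mul_le_mul_of_nonneg_left (mem_filter.1 hx).2 hl)
      _ ≤ ∑ x, exp (l * f x) :=
          sum_le_sum_of_subset_of_nonneg (subset_univ _) fun _ _ _ ↦ (exp_pos _).le
  have hexp : σ * l ^ 2 / 2 = -t ^ 2 / (2 * σ) + l * t := by
    simp only [l]; field_simp; ring
  refine le_of_mul_le_mul_right ?_ (exp_pos (l * t))
  rw [mul_assoc, ← exp_add, ← hexp]
  exact markov.trans (hf l)

lemma card_le_abs_le_of_sum_exp_le (hσ : 0 < σ) (ht : 0 ≤ t)
    (hf : ∀ l : ℝ, ∑ x, exp (l * f x) ≤ C * exp (σ * l ^ 2 / 2)) :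
    (#{x | t ≤ |f x|} : ℝ) ≤ 2 * C * exp (-t ^ 2 / (2 * σ)) := by
  have hneg : ∀ l : ℝ, ∑ x, exp (l * -f x) ≤ C * exp (σ * l ^ 2 / 2) := fun l ↦ by
    simpa only [neg_mul_comm, neg_sq] using hf (-l)
  simp_rw [le_abs, filter_or]
  refine (Nat.cast_le.2 (card_union_le _ _)).trans ?_
  push_cast
  linarith [card_le_apply_le_of_sum_exp_le hσ ht hf, card_le_apply_le_of_sum_exp_le hσ ht hneg]

end Chernoff

lemma sum_Icc_exp_neg_pow_le {x : ℝ} (hx : 0 < x) (N : ℕ) :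
    ∑ k ∈ Icc 1 N, exp (-x) ^ k ≤ 1 / x := by
  have hr1 : exp (-x) < 1 := exp_lt_one_iff.2 (neg_lt_zero.2 hx)
  have hgeom := geom_sum_Ico_le_of_lt_one (m := 1) (n := N + 1) (exp_pos (-x)).le hr1
  rw [Ico_add_one_right_eq_Icc] at hgeom
  refine hgeom.trans ?_
  rw [pow_one, div_le_div_iff₀ (sub_pos.2 hr1) hx]
  have := mul_le_mul_of_nonneg_left (add_one_le_exp x) (exp_pos (-x)).le
  rw [← exp_add, neg_add_cancel, exp_zero] at this
  linarith

lemma add_mul_div_le_mul_div_sub {ψ k n : ℝ} (hψ : 0 ≤ ψ) (hk : 0 ≤ k) (hkn : k < n) :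
    ψ + k * (ψ / n) ≤ n * ψ / (n - k) := by
  have hn : 0 < n := hk.trans_lt hkn
  have hnk : 0 < n - k := sub_pos.2 hkn
  have : n * ψ / (n - k) - (ψ + k * (ψ / n)) = k ^ 2 * ψ / (n * (n - k)) := by
    field_simp; ring
  linarith [show 0 ≤ k ^ 2 * ψ / (n * (n - k)) by positivity]

section Autocorr

variable {m n k : ℕ}

lemma rad_snoc_of_lt (b : Fin m → Bool) (x : Bool) {j : ℕ} (hj : j < m) :
    rad (Fin.snoc b x : Fin (m + 1) → Bool) j = rad b j := by
  simp only [rad, dif_pos (hj.trans m.lt_succ_self), dif_pos hj]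
  rw [show (⟨j, _⟩ : Fin (m + 1)) = Fin.castSucc ⟨j, hj⟩ from rfl, Fin.snoc_castSucc]

lemma rad_snoc_self (b : Fin m → Bool) (x : Bool) :
    rad (Fin.snoc b x : Fin (m + 1) → Bool) m = if x then 1 else -1 := by
  simp only [rad, dif_pos m.lt_succ_self]
  rw [show (⟨m, _⟩ : Fin (m + 1)) = Fin.last m from rfl, Fin.snoc_last]

lemma rad_eq_one_or_eq_neg_one (b : Fin n → Bool) {j : ℕ} (hj : j < n) :
    rad b j = 1 ∨ rad b j = -1 := by
  unfold rad; rw [dif_pos hj]; split_ifs <;> simp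

lemma autocorr_snoc (hk : 1 ≤ k) (hkm : k ≤ m) (b : Fin m → Bool) (x : Bool) :
    autocorr (Fin.snoc b x : Fin (m + 1) → Bool) k
      = autocorr b k + rad b (m - k) * if x then 1 else -1 := by
  unfold autocorr
  rw [show m + 1 - k = m - k + 1 by omega, sum_range_succ]
  congr 1
  · refine sum_congr rfl fun j hj ↦ ?_
    rw [mem_range] at hj
    rw [rad_snoc_of_lt b x (by omega), rad_snoc_of_lt b x (by omega)]
  · rw [Nat.sub_add_cancel hkm, rad_snoc_of_lt b x (by omega), rad_snoc_self]

lemma sum_exp_mul_autocorr (l : ℝ) (hk : 1 ≤ k) :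
    ∑ b : Fin n → Bool, exp (l * autocorr b k) = 2 ^ n * cosh l ^ (n - k) := by
  induction n with
  | zero => simp [autocorr]
  | succ m ih =>
    rcases le_or_gt k m with hkm | hmk
    · have append_bit : ∀ b : Fin m → Bool,
          ∑ x : Bool, exp (l * autocorr (Fin.snoc b x : Fin (m + 1) → Bool) k)
            = exp (l * autocorr b k) * (2 * cosh l) := fun b ↦ by
        rcases rad_eq_one_or_eq_neg_one b (show m - k < m by omega) with h | h <;>
        · simp only [Fintype.sum_bool, autocorr_snoc hk hkm, h, if_true, Bool.false_eq_true,
            if_false, cosh_eq, mul_add, exp_add, mul_one, mul_neg, neg_mul, one_mul, neg_neg]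
          ring
      rw [← (Fin.snocEquiv fun _ ↦ Bool).sum_comp, Fintype.sum_prod_type, sum_comm]
      simp only [Fin.snocEquiv, Equiv.coe_fn_mk, append_bit, ← sum_mul, ih,
        show m + 1 - k = m - k + 1 by omega]
      ring
    · have hzero : ∀ b : Fin (m + 1) → Bool, autocorr b k = 0 := fun b ↦ by
        simp [autocorr, show m + 1 - k = 0 by omega]
      simp [hzero, show m + 1 - k = 0 by omega]

lemma card_le_abs_autocorr_le (hk : 1 ≤ k) (hkn : k < n) {t : ℝ} (ht : 0 ≤ t) :
    (#{b : Fin n → Bool | t ≤ |autocorr b k|} : ℝ)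
      ≤ 2 * 2 ^ n * exp (-t ^ 2 / (2 * ((n - k : ℕ) : ℝ))) := by
  refine card_le_abs_le_of_sum_exp_le (by exact_mod_cast Nat.sub_pos_of_lt hkn) ht fun l ↦ ?_
  rw [sum_exp_mul_autocorr l hk, mul_div_assoc, exp_nat_mul]
  gcongr
  exact cosh_le_exp_half_sq l

lemma psl_le_of_abs_autocorr_le (b : Fin n → Bool) {t : ℝ} (ht : 0 ≤ t)
    (h : ∀ k ∈ Icc 1 (n - 1), |autocorr b k| ≤ t) : psl b ≤ t :=
  Real.iSup_le (fun k ↦ Real.iSup_le (h k) ht) ht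

lemma card_lt_psl_le_sum {t : ℝ} (ht : 0 ≤ t) :
    #{b : Fin n → Bool | t < psl b}
      ≤ ∑ k ∈ Icc 1 (n - 1), #{b : Fin n → Bool | t ≤ |autocorr b k|} := by
  refine (card_le_card fun b hb ↦ ?_).trans card_biUnion_le
  rw [mem_filter] at hb
  by_contra hnot
  simp only [mem_biUnion, mem_filter, mem_univ, true_and, not_exists, not_and, not_le] at hnot
  exact hb.2.not_ge (psl_le_of_abs_autocorr_le b ht fun k hk ↦ (hnot k hk).le)

lemma card_sqrt_le_abs_autocorr_le {ψ : ℝ} (hψ : 0 ≤ ψ) (hk : 1 ≤ k) (hkn : k < n) :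
    (#{b : Fin n → Bool | √(2 * n * ψ) ≤ |autocorr b k|} : ℝ)
      ≤ 2 * 2 ^ n * exp (-ψ) * exp (-(ψ / n)) ^ k := by
  refine (card_le_abs_autocorr_le hk hkn (sqrt_nonneg _)).trans ?_
  rw [mul_assoc _ (exp _), ← exp_nat_mul, ← exp_add]
  gcongr
  rw [sq_sqrt (by positivity), Nat.cast_sub hkn.le, mul_assoc, neg_div,
    mul_div_mul_left _ _ two_ne_zero]
  linarith [add_mul_div_le_mul_div_sub hψ (Nat.cast_nonneg k) (Nat.cast_lt.2 hkn)]

lemma card_sqrt_lt_psl_le {ψ : ℝ} (hn : 0 < n) (hψ : 0 < ψ) :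
    (#{b : Fin n → Bool | √(2 * n * ψ) < psl b} : ℝ)
      ≤ 2 ^ n * (2 * n / (ψ * exp ψ)) := by
  calc (#{b : Fin n → Bool | √(2 * n * ψ) < psl b} : ℝ)
      ≤ ∑ k ∈ Icc 1 (n - 1),
          (#{b : Fin n → Bool | √(2 * n * ψ) ≤ |autocorr b k|} : ℝ) := by
        exact_mod_cast card_lt_psl_le_sum (sqrt_nonneg _)
    _ ≤ ∑ k ∈ Icc 1 (n - 1), 2 * 2 ^ n * exp (-ψ) * exp (-(ψ / n)) ^ k := by
        refine sum_le_sum fun k hk ↦ ?_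
        rw [mem_Icc] at hk
        exact card_sqrt_le_abs_autocorr_le hψ.le hk.1 (by omega)
    _ = 2 * 2 ^ n * exp (-ψ) * ∑ k ∈ Icc 1 (n - 1), exp (-(ψ / n)) ^ k := by rw [mul_sum]
    _ ≤ 2 * 2 ^ n * exp (-ψ) * (1 / (ψ / n)) := by
        gcongr; exact sum_Icc_exp_neg_pow_le (by positivity) _
    _ = 2 ^ n * (2 * n / (ψ * exp ψ)) := by rw [exp_neg]; field_simp

end Autocorr

theorem stmt_18 (ψ : ℕ → ℝ) (h1 : ∀ᶠ n in Filter.atTop, 0 < ψ n)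
    (h2 : Filter.Tendsto (fun n : ℕ => 2 * n / (ψ n * Real.exp (ψ n)))
      Filter.atTop (nhds 0)) :
    Filter.Tendsto
      (fun n : ℕ =>
        ((Finset.univ.filter fun b : Fin n → Bool =>
            psl b ≤ Real.sqrt (2 * n * ψ n)).card : ℝ) / 2 ^ n)
      Filter.atTop (nhds 1) := by
  have lower : ∀ᶠ n : ℕ in atTop, 1 - 2 * n / (ψ n * exp (ψ n))
      ≤ (#{b : Fin n → Bool | psl b ≤ √(2 * n * ψ n)} : ℝ) / 2 ^ n := by
    filter_upwards [h1, eventually_gt_atTop 0] with n hψ hn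
    have htotal : (#{b : Fin n → Bool | psl b ≤ √(2 * n * ψ n)} : ℝ)
        + #{b : Fin n → Bool | √(2 * n * ψ n) < psl b} = 2 ^ n := by
      simp_rw [← not_le]
      exact_mod_cast (card_filter_add_card_filter_not _).trans (by simp)
    rw [le_div_iff₀ (by positivity)]
    linarith [card_sqrt_lt_psl_le hn hψ]
  have upper : ∀ n : ℕ,
      (#{b : Fin n → Bool | psl b ≤ √(2 * n * ψ n)} : ℝ) / 2 ^ n ≤ 1 := fun n ↦
    div_le_one_of_le₀ (by exact_mod_cast (card_filter_le _ _).trans (by simp)) (by positivity)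
  exact tendsto_of_tendsto_of_tendsto_of_le_of_le' (by simpa using h2.const_sub 1)
    tendsto_const_nhds lower (.of_forall upper)
end
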